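/- arXiv:1806.09580 — 3 statements merged into one kernel-verified Lean document; each statement's English description precedes it below -/
import Mathlib

section
/- Constant-length gradients on Euclidean space are parallel: let f : EuclideanSpace ℝ (Fin k) → ℝ be smooth (ContDiff ℝ ⊤) and suppose there is a constant c ≥ 0 such that ‖gradient f x‖ = c for all x. Then the gradient of f is a constant vector field, i.e. there exists w ∈ EuclideanSpace ℝ (Fin k) with ‖w‖ = c such that gradient f x = w for all x; equivalently, f(x) = f(0) + ⟪w, x⟫ for all x. -/
open scoped RealInnerProductSpace
open Set

variable {E : Type*} [NormedAddCommGroup E] [InnerProductSpace ℝ E] [CompleteSpace E]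

set_option linter.unusedSectionVars false in
lemma aux_line (g : E → E) (hg : ContDiff ℝ (⊤ : ℕ∞) g)
    (hker : ∀ y, fderiv ℝ g y (g y) = 0)
    (x v : E) (hv : g x = v) (w : E) (hw : w = v ∨ w = -v) :
    ∀ t : ℝ, 0 ≤ t → g (x + t • w) = v := by
  have hgd : Differentiable ℝ g := hg.differentiable (by simp)
  have hH : Continuous (fderiv ℝ g) := (hg.fderiv_right (m := (⊤ : ℕ∞)) (by simp)).continuous
  set γ : ℝ → E := fun t => x + t • w with hγ
  have hγc : Continuous γ := by fun_prop
  set G : ℝ → E := fun t => g (γ t) - v with hG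
  have hG0 : G 0 = 0 := by simp [hG, hγ, hv]
  have hGd : ∀ t : ℝ, HasDerivAt G (fderiv ℝ g (γ t) w) t := by
    intro t
    have h1 : HasDerivAt γ w t := by
      have h5 := (((hasDerivAt_id t).smul_const w).const_add x); rw [one_smul] at h5; exact h5
    exact (((hgd (γ t)).hasFDerivAt.comp_hasDerivAt t h1).sub_const v)
  have hnorm : ∀ t : ℝ, ‖fderiv ℝ g (γ t) w‖ = ‖fderiv ℝ g (γ t) (G t)‖ := by
    intro t
    have h0 : fderiv ℝ g (γ t) (g (γ t)) = 0 := hker (γ t)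
    have hv' : fderiv ℝ g (γ t) v = -(fderiv ℝ g (γ t) (G t)) := by
      have h1 : fderiv ℝ g (γ t) v = fderiv ℝ g (γ t) (v - g (γ t)) := by
        rw [map_sub, h0, sub_zero]
      have h2 : v - g (γ t) = -(G t) := by simp [hG]
      rw [h1, h2, map_neg]
    rcases hw with h | h
    · rw [h, hv', norm_neg]
    · rw [h, map_neg, hv', neg_neg]
  -- Gronwall on [0, b]
  intro t ht
  obtain ⟨K, hK⟩ : ∃ K, ∀ s ∈ Icc (0:ℝ) t, ‖fderiv ℝ g (γ s)‖ ≤ K :=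
    isCompact_Icc.exists_bound_of_continuousOn (hH.comp hγc).continuousOn
  have hGc : Continuous G := (hgd.continuous.comp hγc).sub continuous_const
  have key := norm_le_gronwallBound_of_norm_deriv_right_le (f := G)
    (f' := fun s => fderiv ℝ g (γ s) w) (a := 0) (b := t) (δ := 0) (K := K) (ε := 0)
    hGc.continuousOn (fun s _ => (hGd s).hasDerivWithinAt)
    (by simp [hG0])
    (fun s hs => by
      rw [hnorm s, add_zero]
      exact ((fderiv ℝ g (γ s)).le_opNorm (G s)).trans
        (mul_le_mul_of_nonneg_right (hK s (Ico_subset_Icc_self hs)) (norm_nonneg _)))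
  have := key t ⟨ht, le_rfl⟩
  rw [gronwallBound_ε0_δ0] at this
  have : G t = 0 := norm_le_zero_iff.mp this
  have := sub_eq_zero.mp this
  simpa [hG, hγ] using this

lemma quad_contra (c A N I J : ℝ) (hc : 0 < c) (hJ : J < c^2)
    (h : ∀ r : ℝ, 0 ≤ A + r*c^2 →
      (A + r*c^2)^2 ≤ c^2 * (N + r*I + (r^2/4)*(2*c^2+2*J))) : False := by
  obtain ⟨a, ha⟩ : ∃ a : ℝ, a = c^2*(c^2-J)/2 := ⟨_, rfl⟩
  have hapos : 0 < a := ha ▸ div_pos (mul_pos (by positivity) (by linarith)) two_pos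
  obtain ⟨b, hb⟩ : ∃ b : ℝ, b = 2*A*c^2 - c^2*I := ⟨_, rfl⟩
  obtain ⟨m, hm⟩ : ∃ m : ℝ, m = A^2 - c^2*N := ⟨_, rfl⟩
  obtain ⟨r, hr⟩ : ∃ r : ℝ, r = |A|/c^2 + (|b|+|m|+1)/a + 1 := ⟨_, rfl⟩
  have hc2 : (0:ℝ) < c^2 := by positivity
  have e1 : |A|/c^2 * c^2 = |A| := div_mul_cancel₀ _ (ne_of_gt hc2)
  have e2 : (|b|+|m|+1)/a * a = |b|+|m|+1 := div_mul_cancel₀ _ (ne_of_gt hapos)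
  have hd1 : 0 ≤ |A|/c^2 := by positivity
  have hd2 : 0 ≤ (|b|+|m|+1)/a := div_nonneg (by positivity) hapos.le
  have hr1 : 1 ≤ r := by rw [hr]; linarith
  have hr0 : 0 ≤ r := by linarith
  have h1 : 0 ≤ A + r*c^2 := by
    have hrc : r * c^2 = |A| + ((|b|+|m|+1)/a)*c^2 + c^2 := by
      rw [hr, add_mul, add_mul, e1, one_mul]
    have := mul_nonneg hd2 hc2.le
    have := neg_abs_le A
    linarith
  have h2 := h r h1
  have hpoly : a*r^2 + b*r + m ≤ 0 := by rw [ha, hb, hm]; nlinarith [h2]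
  have hra : |b|+|m|+1 ≤ a*r := by
    have hrw : r * a = (|A|/c^2)*a + (|b|+|m|+1) + a := by
      rw [hr, add_mul, add_mul, e2, one_mul]
    have := mul_nonneg hd1 hapos.le
    rw [mul_comm]; linarith
  nlinarith [mul_le_mul_of_nonneg_right hra hr0, neg_abs_le b, neg_abs_le m,
    mul_nonneg hr0 (by linarith [neg_abs_le b] : (0:ℝ) ≤ |b| + b),
    mul_le_mul_of_nonneg_right hr1 (abs_nonneg m), abs_nonneg b, abs_nonneg m]
/-- Constant-length gradients on Euclidean space are parallel: if `f` is smooth and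
`‖gradient f x‖ = c` for all `x`, then the gradient of `f` is a constant vector field
`w` with `‖w‖ = c`, and `f x = f 0 + ⟪w, x⟫` for all `x`. -/
theorem gradient_const_norm_eq_const (k : ℕ)
    (f : EuclideanSpace ℝ (Fin k) → ℝ) (hf : ContDiff ℝ (⊤ : ℕ∞) f)
    (c : ℝ) (hc : 0 ≤ c)
    (hgrad : ∀ x : EuclideanSpace ℝ (Fin k), ‖gradient f x‖ = c) :
    ∃ w : EuclideanSpace ℝ (Fin k), ‖w‖ = c ∧
      (∀ x : EuclideanSpace ℝ (Fin k), gradient f x = w) ∧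
      (∀ x : EuclideanSpace ℝ (Fin k), f x = f 0 + ⟪w, x⟫) := by
  have hfd : Differentiable ℝ f := hf.differentiable (by simp)
  have hinner : ∀ (y v : (EuclideanSpace ℝ (Fin k))), ⟪gradient f y, v⟫ = fderiv ℝ f y v :=
    fun y v => InnerProductSpace.toDual_symm_apply
  have hgc : ContDiff ℝ (⊤ : ℕ∞) (gradient f) := by
    exact ((InnerProductSpace.toDual ℝ (EuclideanSpace ℝ (Fin k))).symm.toContinuousLinearEquiv.contDiff).comp
      (hf.fderiv_right (m := (⊤ : ℕ∞)) (by simp))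
  have hgdiff : Differentiable ℝ (gradient f) := hgc.differentiable (by simp)
  have hB : ∀ y : (EuclideanSpace ℝ (Fin k)), HasFDerivAt (gradient f) (fderiv ℝ (gradient f) y) y :=
    fun y => (hgdiff y).hasFDerivAt
  have hD : ∀ y : (EuclideanSpace ℝ (Fin k)), HasFDerivAt (fderiv ℝ f) (fderiv ℝ (fderiv ℝ f) y) y :=
    fun y => (((hf.fderiv_right (m := (⊤ : ℕ∞)) (by simp)).differentiable (by simp)) y).hasFDerivAt
  -- second derivative identity
  have hsecond : ∀ (y a b : (EuclideanSpace ℝ (Fin k))), ⟪fderiv ℝ (gradient f) y a, b⟫ = fderiv ℝ (fderiv ℝ f) y a b := by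
    intro y a b
    have h1 := (hB y).inner ℝ (hasFDerivAt_const b y)
    have e : (fun z : (EuclideanSpace ℝ (Fin k)) => ⟪gradient f z, b⟫) = fun z => fderiv ℝ f z b :=
      funext fun z => hinner z b
    rw [e] at h1
    have h2 : HasFDerivAt (fun z : (EuclideanSpace ℝ (Fin k)) => fderiv ℝ f z b)
        ((ContinuousLinearMap.apply ℝ ℝ b).comp (fderiv ℝ (fderiv ℝ f) y)) y :=
      (ContinuousLinearMap.apply ℝ ℝ b).hasFDerivAt.comp y (hD y)
    have h3 := h1.unique h2
    have h4 := congrArg (fun (L : (EuclideanSpace ℝ (Fin k)) →L[ℝ] ℝ) => L a) h3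
    simp only [ContinuousLinearMap.comp_apply, ContinuousLinearMap.prod_apply,
      fderivInnerCLM_apply, ContinuousLinearMap.zero_apply, inner_zero_right,
      ContinuousLinearMap.apply_apply, add_zero, zero_add] at h4
    exact h4
  have hsymm : ∀ (y a b : (EuclideanSpace ℝ (Fin k))), ⟪fderiv ℝ (gradient f) y a, b⟫ = ⟪fderiv ℝ (gradient f) y b, a⟫ := by
    intro y a b
    rw [hsecond y a b, hsecond y b a]
    exact second_derivative_symmetric (fun z => (hfd z).hasFDerivAt) (hD y) a b
  have hker0 : ∀ (y a : (EuclideanSpace ℝ (Fin k))), ⟪fderiv ℝ (gradient f) y a, gradient f y⟫ = 0 := by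
    intro y a
    have h1 := (hB y).inner ℝ (hB y)
    have e : (fun z : (EuclideanSpace ℝ (Fin k)) => ⟪gradient f z, gradient f z⟫) = fun _ => c ^ 2 := by
      funext z
      rw [real_inner_self_eq_norm_sq, hgrad z]
    rw [e] at h1
    have h2 : HasFDerivAt (fun _ : (EuclideanSpace ℝ (Fin k)) => c ^ 2) (0 : (EuclideanSpace ℝ (Fin k)) →L[ℝ] ℝ) y := hasFDerivAt_const _ _
    have h3 := h1.unique h2
    have h4 := congrArg (fun (L : (EuclideanSpace ℝ (Fin k)) →L[ℝ] ℝ) => L a) h3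
    simp only [ContinuousLinearMap.comp_apply, ContinuousLinearMap.prod_apply,
      fderivInnerCLM_apply, ContinuousLinearMap.zero_apply] at h4
    have h5 : ⟪gradient f y, fderiv ℝ (gradient f) y a⟫
        = ⟪fderiv ℝ (gradient f) y a, gradient f y⟫ := real_inner_comm _ _
    linarith [h4, h5.symm]
  have hker : ∀ y : (EuclideanSpace ℝ (Fin k)), fderiv ℝ (gradient f) y (gradient f y) = 0 := by
    intro y
    apply ext_inner_right ℝ
    intro v
    rw [hsymm y (gradient f y) v, hker0 y v, inner_zero_left]
  -- gradient is constant along its own lines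
  have hline : ∀ (x : (EuclideanSpace ℝ (Fin k))) (t : ℝ), gradient f (x + t • gradient f x) = gradient f x := by
    intro x t
    rcases le_or_gt 0 t with ht | ht
    · exact aux_line (gradient f) hgc hker x _ rfl _ (Or.inl rfl) t ht
    · have h := aux_line (gradient f) hgc hker x _ rfl _ (Or.inr rfl) (-t) (by linarith)
      simpa [smul_neg, neg_smul] using h
  -- f along its gradient lines
  have hfline : ∀ (x : (EuclideanSpace ℝ (Fin k))) (t : ℝ), f (x + t • gradient f x) = f x + t * c ^ 2 := by
    intro x t
    have hder : ∀ s : ℝ, HasDerivAt (fun s : ℝ => f (x + s • gradient f x) - s * c ^ 2) 0 s := by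
      intro s
      have h1 : HasDerivAt (fun s : ℝ => x + s • gradient f x) (gradient f x) s := by
        simpa using ((hasDerivAt_id s).smul_const (gradient f x)).const_add x
      have h2 : HasDerivAt (fun s : ℝ => f (x + s • gradient f x))
          (fderiv ℝ f (x + s • gradient f x) (gradient f x)) s :=
        (hfd _).hasFDerivAt.comp_hasDerivAt s h1
      have h3 : fderiv ℝ f (x + s • gradient f x) (gradient f x) = c ^ 2 := by
        rw [← hinner, hline x s, real_inner_self_eq_norm_sq, hgrad x]
      have h4 : HasDerivAt (fun s : ℝ => s * c ^ 2) (c ^ 2) s := hasDerivAt_mul_const (c ^ 2)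
      have h5 := h2.sub h4; rw [h3, sub_self] at h5; exact h5
    have hconstd := is_const_of_deriv_eq_zero (f := fun s : ℝ => f (x + s • gradient f x) - s * c ^ 2)
      (fun s => (hder s).differentiableAt) (fun s => (hder s).deriv) t 0
    simp only [zero_smul, add_zero, zero_mul, sub_zero] at hconstd
    linarith [hconstd]
  -- Lipschitz bound
  have hlip : ∀ p q : (EuclideanSpace ℝ (Fin k)), f p - f q ≤ c * ‖p - q‖ := by
    intro p q
    have hl : LipschitzWith c.toNNReal f := by
      apply lipschitzWith_of_nnnorm_fderiv_le hfd
      intro x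
      rw [← NNReal.coe_le_coe, coe_nnnorm, Real.coe_toNNReal c hc]
      have : ‖gradient f x‖ = ‖fderiv ℝ f x‖ := by
        simp [gradient]
      rw [← this, hgrad x]
    have := hl.dist_le_mul p q
    rw [Real.dist_eq, dist_eq_norm, Real.coe_toNNReal c hc] at this
    calc f p - f q ≤ |f p - f q| := le_abs_self _
      _ ≤ c * ‖p - q‖ := this
  -- gradient is globally constant
  have hconst : ∀ x y : (EuclideanSpace ℝ (Fin k)), gradient f x = gradient f y := by
    intro x y
    rcases eq_or_lt_of_le hc with hc0 | hpos
    · have h1 : gradient f x = 0 := by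
        have := hgrad x; rw [← hc0] at this; exact norm_eq_zero.mp this
      have h2 : gradient f y = 0 := by
        have := hgrad y; rw [← hc0] at this; exact norm_eq_zero.mp this
      rw [h1, h2]
    by_contra hne
    have hJ : ⟪gradient f y, gradient f x⟫ < c ^ 2 := by
      have hnz : gradient f y - gradient f x ≠ 0 := sub_ne_zero.mpr (Ne.symm hne)
      have h0 : 0 < ‖gradient f y - gradient f x‖ ^ 2 := pow_pos (norm_pos_iff.mpr hnz) 2
      rw [norm_sub_sq_real, hgrad x, hgrad y] at h0
      nlinarith
    apply quad_contra c (f x - f y) (‖x - y‖ ^ 2)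
      ⟪x - y, gradient f y + gradient f x⟫ ⟪gradient f y, gradient f x⟫ hpos hJ
    intro r hr0
    have key := hlip (x + (r / 2) • gradient f x) (y + (-(r / 2)) • gradient f y)
    rw [hfline x (r / 2), hfline y (-(r / 2))] at key
    have hpt : x + (r / 2) • gradient f x - (y + (-(r / 2)) • gradient f y)
        = (x - y) + (r / 2) • (gradient f y + gradient f x) := by
      module
    rw [hpt] at key
    have hA : f x + r / 2 * c ^ 2 - (f y + -(r / 2) * c ^ 2) = (f x - f y) + r * c ^ 2 := by ring
    rw [hA] at key
    have hsq : ((f x - f y) + r * c ^ 2) ^ 2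
        ≤ (c * ‖(x - y) + (r / 2) • (gradient f y + gradient f x)‖) ^ 2 := by
      have hrhs : 0 ≤ c * ‖(x - y) + (r / 2) • (gradient f y + gradient f x)‖ := by positivity
      nlinarith [key, hr0]
    have hexp : ‖(x - y) + (r / 2) • (gradient f y + gradient f x)‖ ^ 2
        = ‖x - y‖ ^ 2 + r * ⟪x - y, gradient f y + gradient f x⟫
          + (r ^ 2 / 4) * (2 * c ^ 2 + 2 * ⟪gradient f y, gradient f x⟫) := by
      rw [norm_add_sq_real, real_inner_smul_right, norm_smul, mul_pow, norm_add_sq_real,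
        hgrad x, hgrad y, Real.norm_eq_abs, sq_abs]
      ring
    calc ((f x - f y) + r * c ^ 2) ^ 2
        ≤ (c * ‖(x - y) + (r / 2) • (gradient f y + gradient f x)‖) ^ 2 := hsq
      _ = c ^ 2 * ‖(x - y) + (r / 2) • (gradient f y + gradient f x)‖ ^ 2 := by ring
      _ = c ^ 2 * (‖x - y‖ ^ 2 + r * ⟪x - y, gradient f y + gradient f x⟫
          + (r ^ 2 / 4) * (2 * c ^ 2 + 2 * ⟪gradient f y, gradient f x⟫)) := by rw [hexp]
  -- conclusion
  refine ⟨gradient f 0, hgrad 0, fun x => hconst x 0, ?_⟩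
  intro x
  have hψ : ∀ y : (EuclideanSpace ℝ (Fin k)), HasFDerivAt (fun z : (EuclideanSpace ℝ (Fin k)) => f z - ⟪gradient f 0, z⟫) (0 : (EuclideanSpace ℝ (Fin k)) →L[ℝ] ℝ) y := by
    intro y
    have h1 : HasFDerivAt (fun z : (EuclideanSpace ℝ (Fin k)) => ⟪gradient f 0, z⟫) (innerSL ℝ (gradient f 0)) y := by
      exact (innerSL ℝ (gradient f 0)).hasFDerivAt
    have h2 := (hfd y).hasFDerivAt.sub h1
    have h3 : fderiv ℝ f y - innerSL ℝ (gradient f 0) = 0 := by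
      ext a
      simp only [ContinuousLinearMap.sub_apply, ContinuousLinearMap.zero_apply, innerSL_apply_apply]
      rw [← hinner y a, hconst y 0]
      ring
    rwa [h3] at h2
  have hcf := is_const_of_fderiv_eq_zero (𝕜 := ℝ)
    (f := fun z : (EuclideanSpace ℝ (Fin k)) => f z - ⟪gradient f 0, z⟫)
    (fun y => (hψ y).differentiableAt) (fun y => (hψ y).fderiv) x 0
  simp only [inner_zero_right, sub_zero] at hcf
  linarith [hcf]
end

section
/- A vector field on Euclidean space with everywhere symmetric derivative is a gradient: let V : EuclideanSpace ℝ (Fin k) → EuclideanSpace ℝ (Fin k) be continuously differentiable (ContDiff ℝ 1) and suppose that for all x, u, w one has ⟪(fderiv ℝ V x) u, w⟫ = ⟪(fderiv ℝ V x) w, u⟫. Then there exists a differentiable function f : EuclideanSpace ℝ (Fin k) → ℝ such that gradient f x = V x for all x. -/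
/-! Symmetry of `DV` says exactly that the 1-form `x ↦ ⟪V x, ·⟫` is closed, so the Poincaré lemma on a
convex open set (integrating along segments from a base point) yields a primitive. -/

open scoped RealInnerProductSpace

theorem Convex.exists_forall_hasGradientAt_of_fderiv_symmetric {E : Type*}
    [NormedAddCommGroup E] [InnerProductSpace ℝ E] [CompleteSpace E] {V : E → E} {s : Set E}
    (hs : Convex ℝ s) (hso : IsOpen s) (hV : DifferentiableOn ℝ V s)
    (hsymm : ∀ x ∈ s, ∀ u w, ⟪fderiv ℝ V x u, w⟫ = ⟪fderiv ℝ V x w, u⟫) :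
    ∃ f : E → ℝ, ∀ x ∈ s, HasGradientAt f (V x) x := by
  have hω : ∀ x ∈ s, HasFDerivAt (fun y ↦ innerSL ℝ (V y)) ((innerSL ℝ).comp (fderiv ℝ V x)) x :=
    fun x hx ↦ (innerSL ℝ).hasFDerivAt.comp x
      ((hV x hx).differentiableAt (hso.mem_nhds hx)).hasFDerivAt
  obtain ⟨f, hf⟩ := hs.exists_forall_hasFDerivAt_of_fderiv_symmetric hso
    (fun x hx ↦ (hω x hx).differentiableAt.differentiableWithinAt)
    (fun x hx u w ↦ by simpa [(hω x hx).fderiv] using hsymm x hx u w)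
  exact ⟨f, fun x hx ↦ hasGradientAt_iff_hasFDerivAt.mpr (hf x hx)⟩

/-- A `C¹` vector field on Euclidean space whose derivative is everywhere symmetric
is a gradient: there is a differentiable `f : ℝ^k → ℝ` with `gradient f = V`. -/
theorem symm_deriv_vectorField_isGradient (k : ℕ)
    (V : EuclideanSpace ℝ (Fin k) → EuclideanSpace ℝ (Fin k))
    (hV : ContDiff ℝ 1 V)
    (hsymm : ∀ x u w : EuclideanSpace ℝ (Fin k),
      ⟪(fderiv ℝ V x) u, w⟫ = ⟪(fderiv ℝ V x) w, u⟫) :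
    ∃ f : EuclideanSpace ℝ (Fin k) → ℝ, Differentiable ℝ f ∧
      ∀ x : EuclideanSpace ℝ (Fin k), gradient f x = V x := by
  obtain ⟨f, hf⟩ := convex_univ.exists_forall_hasGradientAt_of_fderiv_symmetric isOpen_univ
    (hV.differentiable one_ne_zero).differentiableOn fun x _ ↦ hsymm x
  exact ⟨f, fun x ↦ (hf x trivial).differentiableAt, fun x ↦ (hf x trivial).gradient⟩
end

section
/- Let V : EuclideanSpace ℝ (Fin k) → EuclideanSpace ℝ (Fin k) be smooth (ContDiff ℝ ⊤). Suppose (i) the derivative of V is everywhere symmetric, i.e. ⟪(fderiv ℝ V x) u, w⟫ = ⟪(fderiv ℝ V x) w, u⟫ for all x, u, w, and (ii) ‖V x‖ = c for all x, for some constant c ≥ 0. Then V is a constant vector field: there exists w₀ with V x = w₀ for all x. -/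
open scoped RealInnerProductSpace
open Set MeasureTheory Filter Topology intervalIntegral
open scoped Interval

section Aux
variable {k : ℕ}

lemma keyA {V : EuclideanSpace ℝ (Fin k) → EuclideanSpace ℝ (Fin k)}
    (hV : ContDiff ℝ (⊤ : ℕ∞) V)
    (hsymm : ∀ x u w : EuclideanSpace ℝ (Fin k),
      ⟪(fderiv ℝ V x) u, w⟫ = ⟪(fderiv ℝ V x) w, u⟫)
    {c : ℝ} (hnorm : ∀ x, ‖V x‖ = c) (z : EuclideanSpace ℝ (Fin k)) :
    fderiv ℝ V z (V z) = 0 := by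
  have hd : ∀ y, HasFDerivAt V (fderiv ℝ V y) y := fun y =>
    (hV.differentiable (by simp) y).hasFDerivAt
  have hconst : (fun x : EuclideanSpace ℝ (Fin k) => ⟪V x, V x⟫) = fun _ => c ^ 2 := by
    funext x; rw [real_inner_self_eq_norm_sq, hnorm]
  have h2 := ((hd z).inner ℝ (hd z))
  rw [hconst] at h2
  have h3 : HasFDerivAt (fun _ : EuclideanSpace ℝ (Fin k) => c ^ 2) (0 : EuclideanSpace ℝ (Fin k) →L[ℝ] ℝ) z := hasFDerivAt_const _ _
  have h4 := h2.unique h3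
  have h1 : ∀ u, ⟪fderiv ℝ V z u, V z⟫ = 0 := by
    intro u
    have := congrArg (fun L => L u) h4
    simp only [ContinuousLinearMap.comp_apply, ContinuousLinearMap.prod_apply,
      fderivInnerCLM_apply, ContinuousLinearMap.zero_apply] at this
    have h5 : (2 : ℝ) * ⟪fderiv ℝ V z u, V z⟫ = 0 := by
      rw [two_mul]
      nth_rewrite 1 [real_inner_comm]
      exact this
    linarith
  apply ext_inner_right ℝ
  intro u
  rw [inner_zero_left, ← hsymm, h1]

lemma rayA {V : EuclideanSpace ℝ (Fin k) → EuclideanSpace ℝ (Fin k)}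
    (hV : ContDiff ℝ (⊤ : ℕ∞) V)
    (hkey : ∀ z, fderiv ℝ V z (V z) = 0)
    (x : EuclideanSpace ℝ (Fin k)) {t : ℝ} (ht : 0 ≤ t) :
    V (x + t • V x) = V x := by
  have hd : ∀ y, HasFDerivAt V (fderiv ℝ V y) y := fun y =>
    (hV.differentiable (by simp) y).hasFDerivAt
  set γ : ℝ → EuclideanSpace ℝ (Fin k) := fun s => x + s • V x with hγdef
  have hγ : ∀ s : ℝ, HasDerivAt γ (V x) s := by
    intro s
    simpa [hγdef] using ((hasDerivAt_id s).smul_const (V x)).const_add x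
  set g : ℝ → EuclideanSpace ℝ (Fin k) := fun s => V (γ s) - V x with hgdef
  have hg : ∀ s : ℝ, HasDerivAt g (fderiv ℝ V (γ s) (V x)) s := by
    intro s
    exact (((hd (γ s)).comp_hasDerivAt s (hγ s)).sub_const (V x))
  -- bound on the derivative on the compact image
  have hcont : Continuous fun y => fderiv ℝ V y := hV.continuous_fderiv (by simp)
  have hScomp : IsCompact (γ '' Icc 0 t) :=
    (isCompact_Icc).image (continuous_const.add (continuous_id.smul continuous_const))
  obtain ⟨K, hK⟩ := hScomp.exists_bound_of_continuousOn hcont.continuousOn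
  have hbound : ∀ s ∈ Ico 0 t, ‖fderiv ℝ V (γ s) (V x)‖ ≤ K * ‖g s‖ + 0 := by
    intro s hs
    have h1 : fderiv ℝ V (γ s) (V x) = -(fderiv ℝ V (γ s) (g s)) := by
      have := hkey (γ s)
      have h2 : (fderiv ℝ V (γ s)) (g s) = fderiv ℝ V (γ s) (V (γ s)) - fderiv ℝ V (γ s) (V x) := by
        rw [hgdef]; simp [map_sub]
      rw [h2, this]; simp
    rw [h1, norm_neg, add_zero]
    calc ‖fderiv ℝ V (γ s) (g s)‖ ≤ ‖fderiv ℝ V (γ s)‖ * ‖g s‖ :=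
          (fderiv ℝ V (γ s)).le_opNorm (g s)
      _ ≤ K * ‖g s‖ := by
          apply mul_le_mul_of_nonneg_right _ (norm_nonneg _)
          exact hK _ ⟨s, ⟨hs.1, hs.2.le⟩, rfl⟩
  have hgc : ContinuousOn g (Icc 0 t) := by
    apply Continuous.continuousOn
    exact (hV.continuous.comp (continuous_const.add (continuous_id.smul continuous_const))).sub continuous_const
  have hga : ‖g 0‖ ≤ 0 := by
    have : g 0 = 0 := by rw [hgdef]; simp [hγdef]
    simp [this]
  have := norm_le_gronwallBound_of_norm_deriv_right_le hgc
    (fun s _ => (hg s).hasDerivWithinAt) hga hbound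
  have h0 := this t ⟨ht, le_refl t⟩
  rw [gronwallBound_ε0_δ0] at h0
  have : g t = 0 := norm_le_zero_iff.mp h0
  have := sub_eq_zero.mp this
  simpa [hγdef] using this


lemma rayFull {V : EuclideanSpace ℝ (Fin k) → EuclideanSpace ℝ (Fin k)}
    (hV : ContDiff ℝ (⊤ : ℕ∞) V)
    (hsymm : ∀ x u w : EuclideanSpace ℝ (Fin k),
      ⟪(fderiv ℝ V x) u, w⟫ = ⟪(fderiv ℝ V x) w, u⟫)
    {c : ℝ} (hnorm : ∀ x, ‖V x‖ = c) (x : EuclideanSpace ℝ (Fin k)) (t : ℝ) :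
    V (x + t • V x) = V x := by
  have hkey := keyA hV hsymm hnorm
  rcases le_or_gt 0 t with ht | ht
  · exact rayA hV hkey x ht
  · have hVn : ContDiff ℝ (⊤ : ℕ∞) (fun y => -V y) := hV.neg
    have hkeyn : ∀ z, fderiv ℝ (fun y : EuclideanSpace ℝ (Fin k) => -V y) z
        ((fun y => -V y) z) = 0 := by
      intro z
      rw [fderiv_fun_neg]
      simp [hkey z]
    have h2 := rayA hVn hkeyn x (t := -t) (by linarith)
    simp only [smul_neg, neg_smul, neg_neg, neg_inj] at h2
    exact h2

lemma hasDerivF {V : EuclideanSpace ℝ (Fin k) → EuclideanSpace ℝ (Fin k)}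
    (hV : ContDiff ℝ (⊤ : ℕ∞) V)
    (hsymm : ∀ x u w : EuclideanSpace ℝ (Fin k),
      ⟪(fderiv ℝ V x) u, w⟫ = ⟪(fderiv ℝ V x) w, u⟫)
    {c : ℝ} (hnorm : ∀ x, ‖V x‖ = c)
    (a u : EuclideanSpace ℝ (Fin k)) (s₀ : ℝ) :
    HasDerivAt (fun s : ℝ => ∫ t in (0:ℝ)..1, ⟪V (t • (a + s • u)), a + s • u⟫)
      ⟪V (a + s₀ • u), u⟫ s₀ := by
  have hd : ∀ y, HasFDerivAt V (fderiv ℝ V y) y := fun y =>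
    (hV.differentiable (by simp) y).hasFDerivAt
  have hcont : Continuous fun y => fderiv ℝ V y := hV.continuous_fderiv (by simp)
  set F' : ℝ → ℝ → ℝ := fun s t =>
    ⟪V (t • (a + s • u)), u⟫ + t * ⟪(fderiv ℝ V (t • (a + s • u))) u, a + s • u⟫ with hF'def
  -- differentiability in s, for every t and s
  have h_diff : ∀ (t s : ℝ), HasDerivAt (fun s => ⟪V (t • (a + s • u)), a + s • u⟫) (F' s t) s := by
    intro t s
    have hf₂ : HasDerivAt (fun s : ℝ => a + s • u) u s := by
      simpa using ((hasDerivAt_id s).smul_const u).const_add a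
    have hf₂' : HasDerivAt (fun s : ℝ => t • (a + s • u)) (t • u) s := hf₂.const_smul t
    have hf₁ : HasDerivAt (fun s : ℝ => V (t • (a + s • u)))
        ((fderiv ℝ V (t • (a + s • u))) (t • u)) s :=
      (hd _).comp_hasDerivAt s hf₂'
    have := hf₁.inner ℝ hf₂
    refine this.congr_deriv ?_
    have hms : (fderiv ℝ V (t • (a + s • u))) (t • u) = t • (fderiv ℝ V (t • (a + s • u))) u :=
      (fderiv ℝ V _).map_smul t u
    rw [hF'def, hms, real_inner_smul_left]
  -- continuity in t for fixed s
  have hFcont : ∀ s : ℝ, Continuous fun t : ℝ => ⟪V (t • (a + s • u)), a + s • u⟫ := by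
    intro s
    exact (hV.continuous.comp (continuous_id.smul continuous_const)).inner continuous_const
  have hF'cont : ∀ s : ℝ, Continuous fun t : ℝ => F' s t := by
    intro s
    have h1 : Continuous fun t : ℝ => V (t • (a + s • u)) :=
      hV.continuous.comp (continuous_id.smul continuous_const)
    have h2 : Continuous fun t : ℝ => fderiv ℝ V (t • (a + s • u)) :=
      hcont.comp (continuous_id.smul continuous_const)
    exact (h1.inner continuous_const).add
      (continuous_id.mul ((h2.clm_apply continuous_const).inner continuous_const))
  -- bound
  set R : ℝ := ‖a‖ + (|s₀| + 1) * ‖u‖ with hRdef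
  have hR0 : 0 ≤ R := by positivity
  obtain ⟨M, hM⟩ := (isCompact_closedBall (0 : EuclideanSpace ℝ (Fin k)) R).exists_bound_of_continuousOn
    hcont.continuousOn
  have hball : ∀ s ∈ Metric.ball s₀ 1, ∀ t ∈ Ι (0:ℝ) 1, ‖t • (a + s • u)‖ ≤ R ∧ ‖a + s • u‖ ≤ R := by
    intro s hs t ht
    have hIoc : Ι (0:ℝ) 1 = Ioc 0 1 := by rw [uIoc_of_le]; norm_num
    rw [hIoc] at ht
    have h1 : ‖a + s • u‖ ≤ R := by
      have : |s| ≤ |s₀| + 1 := by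
        have := mem_ball_iff_norm.mp hs
        calc |s| = |s₀ + (s - s₀)| := by ring_nf
          _ ≤ |s₀| + |s - s₀| := abs_add_le _ _
          _ ≤ |s₀| + 1 := by
              have : |s - s₀| ≤ 1 := le_of_lt (by simpa [Real.norm_eq_abs] using this)
              linarith
      calc ‖a + s • u‖ ≤ ‖a‖ + ‖s • u‖ := norm_add_le _ _
        _ = ‖a‖ + |s| * ‖u‖ := by rw [norm_smul, Real.norm_eq_abs]
        _ ≤ R := by
            rw [hRdef]
            have := norm_nonneg u
            nlinarith
    refine ⟨?_, h1⟩
    calc ‖t • (a + s • u)‖ = |t| * ‖a + s • u‖ := by rw [norm_smul, Real.norm_eq_abs]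
      _ ≤ 1 * R := by
          apply mul_le_mul _ h1 (norm_nonneg _) zero_le_one
          rw [abs_le]; constructor <;> [linarith [ht.1.le]; exact ht.2]
      _ = R := one_mul R
  have hM0 : 0 ≤ M := le_trans (norm_nonneg _) (hM 0 (Metric.mem_closedBall_self hR0))
  have h_bound : ∀ s ∈ Metric.ball s₀ 1, ∀ t ∈ Ι (0:ℝ) 1,
      ‖F' s t‖ ≤ c * ‖u‖ + M * ‖u‖ * R := by
    intro s hs t ht
    obtain ⟨hz, hb⟩ := hball s hs t ht
    have hIoc : Ι (0:ℝ) 1 = Ioc 0 1 := by rw [uIoc_of_le]; norm_num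
    rw [hIoc] at ht
    have ht1 : |t| ≤ 1 := by rw [abs_le]; constructor <;> [linarith [ht.1.le]; exact ht.2]
    rw [hF'def, Real.norm_eq_abs]
    calc |⟪V (t • (a + s • u)), u⟫ + t * ⟪(fderiv ℝ V (t • (a + s • u))) u, a + s • u⟫|
        ≤ |⟪V (t • (a + s • u)), u⟫| + |t * ⟪(fderiv ℝ V (t • (a + s • u))) u, a + s • u⟫| :=
          abs_add_le _ _
      _ ≤ c * ‖u‖ + M * ‖u‖ * R := by
          have e1 : |⟪V (t • (a + s • u)), u⟫| ≤ c * ‖u‖ := by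
            calc |⟪V (t • (a + s • u)), u⟫| ≤ ‖V (t • (a + s • u))‖ * ‖u‖ :=
                  abs_real_inner_le_norm _ _
              _ = c * ‖u‖ := by rw [hnorm]
          have e2 : |t * ⟪(fderiv ℝ V (t • (a + s • u))) u, a + s • u⟫| ≤ M * ‖u‖ * R := by
            rw [abs_mul]
            have e3 : |⟪(fderiv ℝ V (t • (a + s • u))) u, a + s • u⟫| ≤ M * ‖u‖ * R := by
              calc |⟪(fderiv ℝ V (t • (a + s • u))) u, a + s • u⟫|
                  ≤ ‖(fderiv ℝ V (t • (a + s • u))) u‖ * ‖a + s • u‖ :=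
                    abs_real_inner_le_norm _ _
                _ ≤ (M * ‖u‖) * R := by
                    apply mul_le_mul _ hb (norm_nonneg _) (by positivity)
                    calc ‖(fderiv ℝ V (t • (a + s • u))) u‖
                        ≤ ‖fderiv ℝ V (t • (a + s • u))‖ * ‖u‖ :=
                          (fderiv ℝ V _).le_opNorm u
                      _ ≤ M * ‖u‖ := mul_le_mul_of_nonneg_right
                          (hM _ (Metric.mem_closedBall.mpr (by simpa using hz)))
                          (norm_nonneg _)
            calc |t| * |⟪(fderiv ℝ V (t • (a + s • u))) u, a + s • u⟫|
                ≤ 1 * (M * ‖u‖ * R) := by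
                  apply mul_le_mul ht1 e3 (abs_nonneg _) zero_le_one
              _ = M * ‖u‖ * R := one_mul _
          linarith
  -- apply the dominated parametric derivative theorem
  have key := intervalIntegral.hasDerivAt_integral_of_dominated_loc_of_deriv_le
    (F := fun s t => ⟪V (t • (a + s • u)), a + s • u⟫) (F' := F')
    (μ := volume) (a := (0:ℝ)) (b := 1) (x₀ := s₀)
    (bound := fun _ => c * ‖u‖ + M * ‖u‖ * R)
    (Metric.ball_mem_nhds s₀ zero_lt_one)
    (Filter.Eventually.of_forall fun s => ((hFcont s).aestronglyMeasurable).restrict)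
    ((hFcont s₀).intervalIntegrable 0 1)
    ((hF'cont s₀).aestronglyMeasurable).restrict
    (ae_of_all _ fun t ht s hs => h_bound s hs t ht)
    (intervalIntegrable_const)
    (ae_of_all _ fun t _ s _ => h_diff t s)
  -- now compute the integral of F' s₀
  set b₀ := a + s₀ • u with hb₀
  have hφ : ∀ t : ℝ, HasDerivAt (fun t => t * ⟪V (t • b₀), u⟫) (F' s₀ t) t := by
    intro t
    have hψ : HasDerivAt (fun t : ℝ => V (t • b₀)) ((fderiv ℝ V (t • b₀)) b₀) t := by
      have h1 : HasDerivAt (fun t : ℝ => t • b₀) b₀ t := by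
        simpa using (hasDerivAt_id t).smul_const b₀
      exact (hd _).comp_hasDerivAt t h1
    have hψ2 : HasDerivAt (fun t : ℝ => ⟪V (t • b₀), u⟫) ⟪(fderiv ℝ V (t • b₀)) b₀, u⟫ t := by
      have := hψ.inner ℝ (hasDerivAt_const t u)
      simpa using this
    have := (hasDerivAt_id t).mul hψ2
    refine this.congr_deriv ?_
    rw [hF'def]
    simp only [id_eq, one_mul]
    rw [hsymm]
  have hint : ∫ t in (0:ℝ)..1, F' s₀ t = ⟪V b₀, u⟫ := by
    rw [intervalIntegral.integral_eq_sub_of_hasDerivAt (fun t _ => hφ t)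
      ((hF'cont s₀).intervalIntegrable 0 1)]
    simp
  rw [hint] at key
  exact key.2

lemma pairEqAux {V : EuclideanSpace ℝ (Fin k) → EuclideanSpace ℝ (Fin k)}
    (hV : ContDiff ℝ (⊤ : ℕ∞) V)
    (hsymm : ∀ x u w : EuclideanSpace ℝ (Fin k),
      ⟪(fderiv ℝ V x) u, w⟫ = ⟪(fderiv ℝ V x) w, u⟫)
    {c : ℝ} (hcpos : 0 < c) (hnorm : ∀ x, ‖V x‖ = c)
    (hray : ∀ (x : EuclideanSpace ℝ (Fin k)) (t : ℝ), V (x + t • V x) = V x)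
    (hasDerivF : ∀ (a u : EuclideanSpace ℝ (Fin k)) (s₀ : ℝ),
      HasDerivAt (fun s : ℝ => ∫ t in (0:ℝ)..1, ⟪V (t • (a + s • u)), a + s • u⟫)
        ⟪V (a + s₀ • u), u⟫ s₀) :
    ∀ x y : EuclideanSpace ℝ (Fin k), V x = V y := by
  set f : EuclideanSpace ℝ (Fin k) → ℝ := fun y => ∫ t in (0:ℝ)..1, ⟪V (t • y), y⟫ with hfdef
  have hicont : ∀ (a u : EuclideanSpace ℝ (Fin k)), Continuous fun s : ℝ => ⟪V (a + s • u), u⟫ := by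
    intro a u
    exact (hV.continuous.comp (continuous_const.add (continuous_id.smul continuous_const))).inner
      continuous_const
  have hseg : ∀ a b : EuclideanSpace ℝ (Fin k),
      f b - f a = ∫ s in (0:ℝ)..1, ⟪V (a + s • (b - a)), b - a⟫ := by
    intro a b
    have h3 := intervalIntegral.integral_eq_sub_of_hasDerivAt
      (f := fun s : ℝ => f (a + s • (b - a)))
      (fun s _ => hasDerivF a (b - a) s) ((hicont a (b - a)).intervalIntegrable 0 1)
    rw [h3]
    norm_num
  have hlip : ∀ a b : EuclideanSpace ℝ (Fin k), |f b - f a| ≤ c * ‖b - a‖ := by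
    intro a b
    rw [hseg, ← Real.norm_eq_abs]
    have h1 := intervalIntegral.norm_integral_le_of_norm_le_const
      (C := c * ‖b - a‖) (a := (0:ℝ)) (b := 1)
      (f := fun s => ⟪V (a + s • (b - a)), b - a⟫) ?_
    · simpa using h1
    · intro s _
      rw [Real.norm_eq_abs]
      calc |⟪V (a + s • (b - a)), b - a⟫| ≤ ‖V (a + s • (b - a))‖ * ‖b - a‖ :=
            abs_real_inner_le_norm _ _
        _ = c * ‖b - a‖ := by rw [hnorm]
  have hrayf : ∀ (x : EuclideanSpace ℝ (Fin k)) (t : ℝ),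
      f (x + t • V x) = f x + t * c ^ 2 := by
    intro x t
    have h1 := hseg x (x + t • V x)
    have h2 : x + t • V x - x = t • V x := add_sub_cancel_left x _
    rw [h2] at h1
    have h3 : EqOn (fun s : ℝ => ⟪V (x + s • t • V x), t • V x⟫)
        (fun _ : ℝ => t * c ^ 2) (uIcc (0:ℝ) 1) := by
      intro s hs
      rw [uIcc_of_le zero_le_one] at hs
      simp only
      rw [smul_smul, hray x (s * t), real_inner_smul_right,
        real_inner_self_eq_norm_sq, hnorm]
    rw [intervalIntegral.integral_congr h3] at h1
    simp at h1
    linarith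
  have hconv : ∀ x y : EuclideanSpace ℝ (Fin k), ⟪V x, y - x⟫ ≤ f y - f x := by
    intro x y
    set d := y - x with hd
    set p : ℝ := ⟪V x, d⟫ with hp
    have hb : ∀ t : ℝ, 0 ≤ t → c * (t * c - ‖t • V x - d‖) ≤ f y - f x := by
      intro t ht
      have h1 := hlip (x + t • V x) y
      have h2 : y - (x + t • V x) = d - t • V x := by rw [hd]; abel
      rw [hrayf x t, h2] at h1
      have h3 := (abs_le.mp h1).1
      rw [norm_sub_rev] at h3
      nlinarith [h3]
    set G : ℝ → ℝ := fun s => c * (2 * p - s * ‖d‖ ^ 2) / (c + ‖V x - s • d‖) with hG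
    have hG0 : G 0 = p := by
      rw [hG]
      simp only [zero_smul, sub_zero, zero_mul]
      rw [hnorm]
      field_simp
      ring
    have hGcont : ContinuousAt G 0 := by
      apply ContinuousAt.div
      · fun_prop
      · have : Continuous fun s : ℝ => c + ‖V x - s • d‖ := by
          apply continuous_const.add
          exact (continuous_const.sub (continuous_id.smul continuous_const)).norm
        exact this.continuousAt
      · simp only [zero_smul, sub_zero]
        rw [hnorm]
        positivity
    have htend0 : Filter.Tendsto (fun t : ℝ => G t⁻¹) Filter.atTop (𝓝 p) := by
      rw [← hG0]
      exact hGcont.tendsto.comp tendsto_inv_atTop_zero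
    have heq : ∀ᶠ t : ℝ in Filter.atTop, G t⁻¹ = c * (t * c - ‖t • V x - d‖) := by
      filter_upwards [Filter.eventually_gt_atTop 0] with t ht
      set n := ‖t • V x - d‖ with hn
      have hn0 : 0 ≤ n := norm_nonneg _
      have h1 : ‖V x - t⁻¹ • d‖ = n / t := by
        have he : t⁻¹ • (t • V x - d) = V x - t⁻¹ • d := by
          rw [smul_sub, smul_smul, inv_mul_cancel₀ ht.ne', one_smul]
        rw [← he, norm_smul, Real.norm_eq_abs, abs_of_pos (by positivity), hn]
        ring
      have hn2 : n ^ 2 = t ^ 2 * c ^ 2 - 2 * t * p + ‖d‖ ^ 2 := by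
        rw [hn, norm_sub_sq_real, norm_smul, Real.norm_eq_abs, real_inner_smul_left, hnorm]
        rw [mul_pow, sq_abs]
        ring
      rw [hG]
      simp only
      rw [h1]
      have hden : 0 < c + n / t := by positivity
      rw [div_eq_iff hden.ne']
      field_simp
      nlinarith [hn2]
    have htend : Filter.Tendsto (fun t : ℝ => c * (t * c - ‖t • V x - d‖))
        Filter.atTop (𝓝 p) := htend0.congr' heq
    have hev : ∀ᶠ t : ℝ in Filter.atTop, c * (t * c - ‖t • V x - d‖) ≤ f y - f x := by
      filter_upwards [Filter.eventually_ge_atTop (0:ℝ)] with t ht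
      exact hb t ht
    exact le_of_tendsto htend hev
  -- final step
  intro x y
  set q : ℝ := ⟪V y, V x⟫ with hq
  have hq1 : q ≤ c ^ 2 := by
    calc q ≤ ‖V y‖ * ‖V x‖ := real_inner_le_norm _ _
      _ = c ^ 2 := by rw [hnorm, hnorm]; ring
  have hq2 : c ^ 2 ≤ q := by
    by_contra hlt
    push_neg at hlt
    set C : ℝ := f x - f y - ⟪V y, x - y⟫ with hC
    have h : ∀ t : ℝ, t * (q - c ^ 2) ≤ C := by
      intro t
      have h1 := hconv y (x + t • V x)
      rw [hrayf x t] at h1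
      have h2 : ⟪V y, x + t • V x - y⟫ = ⟪V y, x - y⟫ + t * q := by
        have he2 : x + t • V x - y = (x - y) + t • V x := by abel
        rw [he2, inner_add_right, real_inner_smul_right]
      rw [h2] at h1
      rw [hC]
      linarith
    have hneg : q - c ^ 2 < 0 := by linarith
    have h3 := h ((C + 1) / (q - c ^ 2))
    rw [div_mul_cancel₀ _ hneg.ne] at h3
    linarith
  have hqe : q = c ^ 2 := le_antisymm hq1 hq2
  have hnsq : ‖V x - V y‖ ^ 2 = 0 := by
    rw [norm_sub_sq_real, hnorm, hnorm, real_inner_comm]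
    rw [← hq, hqe]
    ring
  have := pow_eq_zero_iff (n := 2) (by norm_num) |>.mp hnsq
  exact sub_eq_zero.mp (norm_eq_zero.mp this)

end Aux

/-- A smooth vector field on Euclidean space with everywhere symmetric derivative
(i.e. defining a closed 1-form, hence a gradient) and constant norm is constant. -/
theorem symm_deriv_const_norm_vectorField_isConst (k : ℕ)
    (V : EuclideanSpace ℝ (Fin k) → EuclideanSpace ℝ (Fin k))
    (hV : ContDiff ℝ (⊤ : ℕ∞) V)
    (hsymm : ∀ x u w : EuclideanSpace ℝ (Fin k),
      ⟪(fderiv ℝ V x) u, w⟫ = ⟪(fderiv ℝ V x) w, u⟫)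
    (c : ℝ) (hc : 0 ≤ c)
    (hnorm : ∀ x : EuclideanSpace ℝ (Fin k), ‖V x‖ = c) :
    ∃ w₀ : EuclideanSpace ℝ (Fin k),
      ∀ x : EuclideanSpace ℝ (Fin k), V x = w₀ := by
  rcases eq_or_lt_of_le hc with hc0 | hcpos
  · refine ⟨0, fun x => ?_⟩
    have h := hnorm x
    rw [← hc0] at h
    exact norm_eq_zero.mp h
  · have main := pairEqAux hV hsymm hcpos hnorm (rayFull hV hsymm hnorm)
      (hasDerivF hV hsymm hnorm)
    exact ⟨V 0, fun x => main x 0⟩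
end
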